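/- arXiv:1201.0836 — 2 statements merged into one kernel-verified Lean document; each statement's English description precedes it below -/
import Mathlib

section
/- Let S_n be a random walk with i.i.d. jumps with positive mean μ, set γ := P(inf_{k≥0} S_k = 0) and F_+(Δ) := P(ξ ≥ Δ). If Δ > 0 satisfies F_+(Δ) > 0, then for any n ≥ 1, the sum over k = 1, ..., n of P(S_k ∈ [x, x+Δ)) is at most P(max_{j≤n} S_j ≥ x) / (γ F_+(Δ)). -/
/-!
For `1 ≤ k ≤ n`, consider the event that `S_k ∈ [x, x + Δ)`, the next jump is at least `Δ`, and the
walk never returns below `S_{k+1}` afterwards. By independence and stationarity of the jumps it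
has probability `P(S_k ∈ [x, x + Δ)) · F₊(Δ) · P(S_m ≥ 0 for all m)`. On the `k`-th event the walk
stays at or above `x + Δ` after time `k`, so these events are disjoint, and each lies in
`{max_{j ≤ n} S_j ≥ x}`. Finally `γ ≤ P(S_m ≥ 0 for all m)`.
-/

open MeasureTheory ProbabilityTheory Filter Finset Function

namespace ProbabilityTheory

variable {Ω ι β : Type*} {mΩ : MeasurableSpace Ω} {mβ : MeasurableSpace β} {μ : Measure Ω}
  {X : ι → Ω → β}

lemma measurable_biSup_comap {s : Set ι} {i : ι} (hi : i ∈ s) :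
    Measurable[⨆ j ∈ s, mβ.comap (X j)] (X i) :=
  Measurable.of_comap_le (le_biSup (fun j => mβ.comap (X j)) hi)

lemma iIndepFun.measure_inter_of_disjoint (hmeas : ∀ i, Measurable (X i)) (hindep : iIndepFun X μ)
    {s t : Set ι} (hst : Disjoint s t) {A B : Set Ω}
    (hA : MeasurableSet[⨆ i ∈ s, mβ.comap (X i)] A)
    (hB : MeasurableSet[⨆ i ∈ t, mβ.comap (X i)] B) :
    μ (A ∩ B) = μ A * μ B :=
  (Indep_iff _ _ _).mp
    (indep_iSup_of_disjoint (fun i => (hmeas i).comap_le) hindep.iIndep hst) A B hA hB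

lemma iIndepFun.map_shift_eq_map [IsProbabilityMeasure μ] {X : ℕ → Ω → β}
    (hmeas : ∀ i, Measurable (X i)) (hindep : iIndepFun X μ)
    (hident : ∀ i, IdentDistrib (X i) (X 0) μ μ) (s : ℕ) :
    μ.map (fun ω i => X (s + i) ω) = μ.map (fun ω i => X i ω) := by
  rw [(hindep.precomp (add_right_injective s)).map_fun_eq_infinitePi_map (fun i => hmeas _),
    hindep.map_fun_eq_infinitePi_map hmeas]
  simp only [(hident _).map_eq]

end ProbabilityTheory

lemma add_le_sum_range_of_lt {v : ℕ → ℝ} {x Δ : ℝ} {a b : ℕ} (hab : a < b)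
    (hx : x ≤ ∑ i ∈ range a, v i) (hΔ : Δ ≤ v a) (htail : ∀ m, 0 ≤ ∑ i ∈ range m, v (a + 1 + i)) :
    x + Δ ≤ ∑ i ∈ range b, v i := by
  obtain ⟨m, rfl⟩ : ∃ m, b = a + 1 + m := ⟨b - (a + 1), by omega⟩
  rw [sum_range_add, sum_range_succ]
  linarith [htail m]

section RandomWalk

variable {Ω : Type*} {mΩ : MeasurableSpace Ω} {μ : Measure Ω} {ξ : ℕ → Ω → ℝ}

lemma measurableSet_partialSums_nonneg :
    MeasurableSet {v : ℕ → ℝ | ∀ m, 0 ≤ ∑ i ∈ range m, v i} := by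
  simp only [Set.ofPred_forall]
  exact MeasurableSet.iInter fun _ =>
    measurableSet_le measurable_const (Finset.measurable_sum _ fun i _ => measurable_pi_apply i)

lemma measure_partialSums_shift_nonneg [IsProbabilityMeasure μ] (hmeas : ∀ i, Measurable (ξ i))
    (hindep : iIndepFun ξ μ) (hident : ∀ i, IdentDistrib (ξ i) (ξ 0) μ μ) (s : ℕ) :
    μ {ω | ∀ m, 0 ≤ ∑ i ∈ range m, ξ (s + i) ω} = μ {ω | ∀ m, 0 ≤ ∑ i ∈ range m, ξ i ω} := by
  have := congrArg (fun ν : Measure (ℕ → ℝ) => ν {v | ∀ m, 0 ≤ ∑ i ∈ range m, v i})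
    (hindep.map_shift_eq_map hmeas hident s)
  rwa [Measure.map_apply (measurable_pi_lambda _ fun i => hmeas _)
    measurableSet_partialSums_nonneg, Measure.map_apply (measurable_pi_lambda _ hmeas)
    measurableSet_partialSums_nonneg] at this

lemma measure_partialSum_mem_inter_eq [IsProbabilityMeasure μ] (hmeas : ∀ i, Measurable (ξ i))
    (hindep : iIndepFun ξ μ) (hident : ∀ i, IdentDistrib (ξ i) (ξ 0) μ μ) (k : ℕ) {I : Set ℝ}
    (hI : MeasurableSet I) (c : ℝ) :
    μ ({ω | ∑ i ∈ range k, ξ i ω ∈ I} ∩ {ω | c ≤ ξ k ω} ∩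
        {ω | ∀ m, 0 ≤ ∑ i ∈ range m, ξ (k + 1 + i) ω}) =
      μ {ω | ∑ i ∈ range k, ξ i ω ∈ I} * μ {ω | c ≤ ξ 0 ω} *
        μ {ω | ∀ m, 0 ≤ ∑ i ∈ range m, ξ i ω} := by
  let 𝓕 (s : Set ℕ) : MeasurableSpace Ω := ⨆ i ∈ s, .comap (ξ i) inferInstance
  have h𝓕 : Monotone 𝓕 := fun _ _ hst => biSup_mono hst
  have hpast : MeasurableSet[𝓕 (Set.Iio k)] {ω | ∑ i ∈ range k, ξ i ω ∈ I} :=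
    Finset.measurable_sum _ (fun i hi => measurable_biSup_comap (Set.mem_Iio.2 (mem_range.1 hi)))
      hI
  have hpresent : MeasurableSet[𝓕 {k}] {ω | c ≤ ξ k ω} :=
    measurable_biSup_comap (Set.mem_singleton k) measurableSet_Ici
  have hfuture : MeasurableSet[𝓕 (Set.Ioi k)]
      {ω | ∀ m, 0 ≤ ∑ i ∈ range m, ξ (k + 1 + i) ω} := by
    simp only [Set.ofPred_forall]
    exact MeasurableSet.iInter fun m => Finset.measurable_sum _
      (fun i _ => measurable_biSup_comap (by simp only [Set.mem_Ioi]; omega)) measurableSet_Ici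
  have hupto : MeasurableSet[𝓕 (Set.Iic k)]
      ({ω | ∑ i ∈ range k, ξ i ω ∈ I} ∩ {ω | c ≤ ξ k ω}) :=
    (h𝓕 Set.Iio_subset_Iic_self _ hpast).inter
      (h𝓕 (Set.singleton_subset_iff.2 Set.self_mem_Iic) _ hpresent)
  rw [hindep.measure_inter_of_disjoint hmeas (Set.Iic_disjoint_Ioi le_rfl) hupto hfuture,
    hindep.measure_inter_of_disjoint hmeas (by simp) hpast hpresent,
    ← measure_partialSums_shift_nonneg hmeas hindep hident (k + 1)]
  congr 2
  exact (hident k).measure_mem_eq measurableSet_Ici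

lemma sum_measure_partialSum_mem_Ico_mul_le [IsProbabilityMeasure μ]
    (hmeas : ∀ i, Measurable (ξ i)) (hindep : iIndepFun ξ μ)
    (hident : ∀ i, IdentDistrib (ξ i) (ξ 0) μ μ) (s : Finset ℕ) (x Δ : ℝ) :
    (∑ k ∈ s, μ {ω | ∑ i ∈ range k, ξ i ω ∈ Set.Ico x (x + Δ)}) *
        (μ {ω | Δ ≤ ξ 0 ω} * μ {ω | ∀ m, 0 ≤ ∑ i ∈ range m, ξ i ω}) ≤
      μ {ω | ∃ k ∈ s, x ≤ ∑ i ∈ range k, ξ i ω} := by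
  let ladder (k : ℕ) : Set Ω := {ω | ∑ i ∈ range k, ξ i ω ∈ Set.Ico x (x + Δ)} ∩
    {ω | Δ ≤ ξ k ω} ∩ {ω | ∀ m, 0 ≤ ∑ i ∈ range m, ξ (k + 1 + i) ω}
  have hladder (k : ℕ) : MeasurableSet (ladder k) :=
    ((Finset.measurable_sum _ fun i _ => hmeas i) measurableSet_Ico).inter
      (measurableSet_le measurable_const (hmeas k)) |>.inter
      (measurableSet_partialSums_nonneg.preimage (measurable_pi_lambda _ fun i => hmeas _))
  have hdisj : Pairwise (Disjoint on ladder) := by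
    refine (pairwise_disjoint_on ladder).2 fun a b hab => Set.disjoint_left.2 ?_
    rintro ω ⟨⟨⟨hxa, -⟩, hΔa⟩, htail⟩ ⟨⟨⟨-, hb⟩, -⟩, -⟩
    exact (add_le_sum_range_of_lt hab hxa hΔa htail).not_gt hb
  calc (∑ k ∈ s, μ {ω | ∑ i ∈ range k, ξ i ω ∈ Set.Ico x (x + Δ)}) *
          (μ {ω | Δ ≤ ξ 0 ω} * μ {ω | ∀ m, 0 ≤ ∑ i ∈ range m, ξ i ω})
      = ∑ k ∈ s, μ (ladder k) := by
        simp only [sum_mul, ← mul_assoc,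
          measure_partialSum_mem_inter_eq hmeas hindep hident _ measurableSet_Ico, ladder]
    _ = μ (⋃ k ∈ s, ladder k) :=
        (measure_biUnion_finset (hdisj.set_pairwise _) fun k _ => hladder k).symm
    _ ≤ μ {ω | ∃ k ∈ s, x ≤ ∑ i ∈ range k, ξ i ω} :=
        measure_mono <| Set.iUnion₂_subset fun k hk ω hω => ⟨k, hk, hω.1.1.1⟩

lemma ae_tendsto_partialSums_atTop (hindep : iIndepFun ξ μ)
    (hident : ∀ i, IdentDistrib (ξ i) (ξ 0) μ μ) (hint : Integrable (ξ 0) μ)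
    (hpos : 0 < ∫ ω, ξ 0 ω ∂μ) :
    ∀ᵐ ω ∂μ, Tendsto (fun m => ∑ i ∈ range m, ξ i ω) atTop atTop := by
  filter_upwards [strong_law_ae_real ξ hint (fun i j hij => hindep.indepFun hij) hident]
    with _ hω
  refine (hω.pos_mul_atTop hpos tendsto_natCast_atTop_atTop).congr' ?_
  filter_upwards [eventually_ne_atTop 0] with m hm
  field_simp

end RandomWalk

lemma measure_iInf_eq_zero_le {Ω : Type*} {mΩ : MeasurableSpace Ω} {μ : Measure Ω}
    {S : ℕ → Ω → ℝ} (hS : ∀ᵐ ω ∂μ, BddBelow (Set.range fun k => S k ω)) :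
    μ {ω | ⨅ k, S k ω = 0} ≤ μ {ω | ∀ k, 0 ≤ S k ω} :=
  measure_mono_ae <| hS.mono fun _ hω hinf k => hinf ▸ ciInf_le hω k

theorem stmt1_general {Ω : Type*} [MeasureSpace Ω] [IsProbabilityMeasure (ℙ : Measure Ω)]
    (ξ : ℕ → Ω → ℝ)
    (hmeas : ∀ n, Measurable (ξ n))
    (hindep : iIndepFun ξ ℙ)
    (hident : ∀ n, IdentDistrib (ξ n) (ξ 0) ℙ ℙ)
    (hint : Integrable (ξ 0) ℙ)
    (hμpos : 0 < ∫ ω, ξ 0 ω ∂ℙ)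
    (S : ℕ → Ω → ℝ) (hS : ∀ n ω, S n ω = ∑ i ∈ Finset.range n, ξ i ω)
    (γ : ENNReal) (hγ : γ = ℙ {ω | (⨅ k : ℕ, S k ω) = 0})
    (x Δ : ℝ)
    (n : ℕ) :
    ∑ k ∈ Finset.Icc 1 n, ℙ {ω | S k ω ∈ Set.Ico x (x + Δ)} ≤
      ℙ {ω | ∃ j ≤ n, x ≤ S j ω} / (γ * ℙ {ω | Δ ≤ ξ 0 ω}) := by
  simp only [hS] at hγ ⊢
  set A := {ω | ∃ j ≤ n, x ≤ ∑ i ∈ range j, ξ i ω}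
  have hsub : {ω | ∃ k ∈ Icc 1 n, x ≤ ∑ i ∈ range k, ξ i ω} ⊆ A :=
    fun _ ⟨k, hk, hx⟩ => ⟨k, (mem_Icc.1 hk).2, hx⟩
  -- `⨅` of a sequence unbounded below is `0`; the strong law rules this out almost surely.
  have hγ_le : γ ≤ ℙ {ω | ∀ m, 0 ≤ ∑ i ∈ range m, ξ i ω} :=
    hγ ▸ measure_iInf_eq_zero_le <| (ae_tendsto_partialSums_atTop hindep hident hint hμpos).mono
      fun _ => bddBelow_range_of_tendsto_atTop_atTop
  have hladder := (sum_measure_partialSum_mem_Ico_mul_le hmeas hindep hident (Icc 1 n) x Δ).trans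
    (measure_mono hsub)
  by_cases hA : ℙ A = 0
  · rw [sum_eq_zero fun k hk => measure_mono_null (fun _ hω => hsub ⟨k, hk, hω.1⟩) hA]
    exact zero_le
  rw [ENNReal.le_div_iff_mul_le (Or.inr hA) (Or.inl (ENNReal.mul_ne_top
    (ne_top_of_le_ne_top (measure_ne_top _ _) hγ_le) (measure_ne_top _ _)))]
  refine le_trans ?_ hladder
  rw [mul_comm γ]
  gcongr

/-- For a random walk with i.i.d. jumps with positive mean, if
`F₊(Δ) = P(ξ ≥ Δ) > 0` then for any `n ≥ 1`,
`∑_{k=1}^n P(S k ∈ [x, x+Δ)) ≤ P(max_{j ≤ n} S j ≥ x) / (γ F₊(Δ))`,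
where `γ = P(inf_{k ≥ 0} S k = 0)`. -/
theorem stmt1 {Ω : Type*} [MeasureSpace Ω] [IsProbabilityMeasure (ℙ : Measure Ω)]
    (ξ : ℕ → Ω → ℝ)
    (hmeas : ∀ n, Measurable (ξ n))
    (hindep : iIndepFun ξ ℙ)
    (hident : ∀ n, IdentDistrib (ξ n) (ξ 0) ℙ ℙ)
    (hint : Integrable (ξ 0) ℙ)
    (hμpos : 0 < ∫ ω, ξ 0 ω ∂ℙ)
    (S : ℕ → Ω → ℝ) (hS : ∀ n ω, S n ω = ∑ i ∈ Finset.range n, ξ i ω)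
    (γ : ENNReal) (hγ : γ = ℙ {ω | (⨅ k : ℕ, S k ω) = 0})
    (x Δ : ℝ) (hΔ : 0 < Δ)
    (hF : 0 < ℙ {ω | Δ ≤ ξ 0 ω})
    (n : ℕ) (hn : 1 ≤ n) :
    ∑ k ∈ Finset.Icc 1 n, ℙ {ω | S k ω ∈ Set.Ico x (x + Δ)} ≤
      ℙ {ω | ∃ j ≤ n, x ≤ S j ω} / (γ * ℙ {ω | Δ ≤ ξ 0 ω}) :=
  stmt1_general ξ hmeas hindep hident hint hμpos S hS γ hγ x Δ n
end

section
/- Let a_n ≥ 0 be weights and suppose F_-(t) := P(ξ < −t) is a locally regularly varying function of index −β with β > 2, E[ξ] = μ > 0 and E[ξ²] < ∞. If the series Σ_n a_n F_-(n) diverges, then h(x, Δ) := Σ_n a_n P(S_n ∈ [x, x+Δ)) = ∞ for every Δ > 0 and every x. -/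
/-!
One big jump. For large `n`, with probability at least `1/2` the `n - 1` summands other than
`ξᵢ` have a sum within `μn/4` of its mean (Chebyshev) and none of them lies below `-μn/8`
(Markov for `ξ²`). On that event `Sₙ ∈ [x, x + Δ)` as soon as `ξᵢ` falls into a window of length
`Δ` at distance of order `μn` to the left of the origin, and by local regular variation this has
probability of order `F₋(n)/n`. These `n` events are disjoint, because on the `i`-th one
`ξᵢ < -μn/8`, so `P(Sₙ ∈ [x, x + Δ)) ≥ c F₋(n)` and `h(x, Δ) ≥ c ∑ₙ aₙ F₋(n) = ∞`.
-/

open MeasureTheory ProbabilityTheory Filter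

/-- A function is regularly varying (at infinity) of index `ρ`. -/
def RegularlyVarying (f : ℝ → ℝ) (ρ : ℝ) : Prop :=
  ∀ c : ℝ, 0 < c → Tendsto (fun x => f (c * x) / f x) atTop (nhds (c ^ ρ))

/-- A function is locally regularly varying of index `-β`: it is regularly varying
and `f x - f (x + Δ) ~ Δ · β f(x)/x` as `x → ∞` for each fixed `Δ > 0`. -/
def LocallyRegularlyVarying (f : ℝ → ℝ) (β : ℝ) : Prop :=
  RegularlyVarying f (-β) ∧
    ∀ Δ : ℝ, 0 < Δ →
      Tendsto (fun x => (f x - f (x + Δ)) / (Δ * (β * f x / x))) atTop (nhds 1)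

open scoped ENNReal
open Set

theorem RegularlyVarying.not_eventually_eq_zero {f : ℝ → ℝ} {ρ : ℝ} (hf : RegularlyVarying f ρ) :
    ¬ ∀ᶠ x in atTop, f x = 0 := by
  intro h
  have h2 : ∀ᶠ x in atTop, f (2 * x) = 0 :=
    (tendsto_id.const_mul_atTop two_pos).eventually h
  have hzero : Tendsto (fun x => f (2 * x) / f x) atTop (nhds 0) :=
    tendsto_const_nhds.congr' <| (h.and h2).mono fun x hx => by simp [hx.1, hx.2]
  exact (Real.rpow_pos_of_pos two_pos ρ).ne' (tendsto_nhds_unique (hf 2 two_pos) hzero)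

theorem RegularlyVarying.pos_of_antitone {f : ℝ → ℝ} {ρ : ℝ} (hf : RegularlyVarying f ρ)
    (hanti : Antitone f) (hnonneg : ∀ x, 0 ≤ f x) (x : ℝ) : 0 < f x := by
  refine (hnonneg x).lt_of_ne' fun hx => hf.not_eventually_eq_zero ?_
  filter_upwards [eventually_ge_atTop x] with y hy
  exact le_antisymm (hx ▸ hanti hy) (hnonneg y)

theorem RegularlyVarying.eventually_half_rpow_mul_le {f : ℝ → ℝ} {ρ : ℝ}
    (hf : RegularlyVarying f ρ) (hpos : ∀ x, 0 < f x) {c : ℝ} (hc : 0 < c) :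
    ∀ᶠ x in atTop, c ^ ρ / 2 * f x ≤ f (c * x) := by
  have hlt : c ^ ρ / 2 < c ^ ρ := half_lt_self (Real.rpow_pos_of_pos hc ρ)
  filter_upwards [(hf c hc).eventually (eventually_ge_nhds hlt)] with x hx
  exact (le_div_iff₀ (hpos x)).1 hx

theorem LocallyRegularlyVarying.eventually_half_mul_le_sub {f : ℝ → ℝ} {β : ℝ}
    (hf : LocallyRegularlyVarying f β) (hβ : 0 < β) (hpos : ∀ x, 0 < f x) {Δ : ℝ} (hΔ : 0 < Δ) :
    ∀ᶠ x in atTop, β / 2 * Δ * (f x / x) ≤ f x - f (x + Δ) := by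
  filter_upwards [(hf.2 Δ hΔ).eventually (eventually_ge_nhds one_half_lt_one),
    eventually_gt_atTop 0] with x hx hx0
  have hden : 0 < Δ * (β * f x / x) := by have := hpos x; positivity
  calc β / 2 * Δ * (f x / x) = 1 / 2 * (Δ * (β * f x / x)) := by ring
    _ ≤ f x - f (x + Δ) := (le_div_iff₀ hden).1 hx

theorem LocallyRegularlyVarying.exists_pos_eventually_mul_div_le_sub {f : ℝ → ℝ} {β : ℝ}
    (hf : LocallyRegularlyVarying f β) (hβ : 0 < β) (hanti : Antitone f) (hpos : ∀ x, 0 < f x)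
    {Δ : ℝ} (hΔ : 0 < Δ) {K : ℝ} (hK : 0 < K) :
    ∃ c > 0, ∃ y₀, ∀ᶠ z in atTop, ∀ y, y₀ ≤ y → y ≤ K * z → c * (f z / z) ≤ f y - f (y + Δ) := by
  obtain ⟨y₀, hy₀⟩ := eventually_atTop.1
    ((hf.eventually_half_mul_le_sub hβ hpos hΔ).and (eventually_gt_atTop 0))
  have hρ : 0 < K ^ (-β) := Real.rpow_pos_of_pos hK _
  refine ⟨β / 2 * Δ * (K ^ (-β) / 2 / K), by positivity, y₀, ?_⟩
  filter_upwards [hf.1.eventually_half_rpow_mul_le hpos hK, eventually_gt_atTop 0]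
    with z hz hz0 y hy hyz
  obtain ⟨hinc, hy0⟩ := hy₀ y hy
  have hdiv : f (K * z) / (K * z) ≤ f y / y :=
    div_le_div₀ (hpos y).le (hanti hyz) hy0 hyz
  calc β / 2 * Δ * (K ^ (-β) / 2 / K) * (f z / z)
      = β / 2 * Δ * (K ^ (-β) / 2 * f z / (K * z)) := by field_simp
    _ ≤ β / 2 * Δ * (f (K * z) / (K * z)) := by gcongr
    _ ≤ β / 2 * Δ * (f y / y) := by gcongr
    _ ≤ f y - f (y + Δ) := hinc

noncomputable def leftTail {Ω : Type*} [MeasurableSpace Ω] (P : Measure Ω) (X : Ω → ℝ) (t : ℝ) :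
    ℝ :=
  (P {ω | X ω < -t}).toReal

theorem leftTail_nonneg {Ω : Type*} [MeasurableSpace Ω] (P : Measure Ω) (X : Ω → ℝ) (t : ℝ) :
    0 ≤ leftTail P X t :=
  ENNReal.toReal_nonneg

section LeftTail

variable {Ω : Type*} [MeasurableSpace Ω] {P : Measure Ω} [IsFiniteMeasure P] {X : Ω → ℝ}

theorem antitone_leftTail : Antitone (leftTail P X) := fun _ _ hst =>
  ENNReal.toReal_mono (measure_ne_top _ _)
    (measure_mono fun _ hω => lt_of_lt_of_le hω (neg_le_neg hst))

theorem measure_lt_eq_ofReal_leftTail (b : ℝ) :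
    P {ω | X ω < b} = ENNReal.ofReal (leftTail P X (-b)) := by
  rw [leftTail, neg_neg, ENNReal.ofReal_toReal (measure_ne_top _ _)]

theorem measure_preimage_Ico_eq_ofReal_leftTail_sub (hX : Measurable X) {u v : ℝ} (huv : u ≤ v) :
    P (X ⁻¹' Ico u v) = ENNReal.ofReal (leftTail P X (-v) - leftTail P X (-u)) := by
  have hsub : {ω | X ω < u} ⊆ {ω | X ω < v} := fun _ hω => lt_of_lt_of_le hω huv
  have hdiff : X ⁻¹' Ico u v = {ω | X ω < v} \ {ω | X ω < u} := by
    ext ω; simp [and_comm]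
  rw [hdiff, measure_sdiff hsub (hX measurableSet_Iio).nullMeasurableSet (measure_ne_top _ _),
    measure_lt_eq_ofReal_leftTail, measure_lt_eq_ofReal_leftTail,
    ENNReal.ofReal_sub _ (leftTail_nonneg _ _ _)]

theorem leftTail_le_integral_sq_div (hX2 : Integrable (fun ω => X ω ^ 2) P) {t : ℝ} (ht : 0 < t) :
    leftTail P X t ≤ (∫ ω, X ω ^ 2 ∂P) / t ^ 2 := by
  have hsub : {ω | X ω < -t} ⊆ {ω | t ^ 2 ≤ X ω ^ 2} := fun ω (hω : X ω < -t) => by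
    show t ^ 2 ≤ X ω ^ 2; nlinarith
  have hmarkov := mul_meas_ge_le_integral_of_nonneg (ae_of_all P fun ω => sq_nonneg (X ω)) hX2
    (t ^ 2)
  rw [le_div_iff₀ (by positivity), mul_comm]
  exact le_trans (mul_le_mul_of_nonneg_left (measureReal_mono hsub) (by positivity)) hmarkov

end LeftTail

theorem ProbabilityTheory.IndepFun.mul_measure_le_measure {Ω E F : Type*} [MeasurableSpace Ω]
    [MeasurableSpace E] [MeasurableSpace F] {P : Measure Ω} [IsFiniteMeasure P] {X : Ω → E}
    {Y : Ω → F} (hXY : IndepFun X Y P) (hX : Measurable X) (hY : Measurable Y) {g : Set E}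
    (hg : MeasurableSet g) {C : Set (E × F)} (hC : MeasurableSet C) {c : ℝ≥0∞}
    (hc : ∀ v ∈ g, c ≤ P (Y ⁻¹' {w | (v, w) ∈ C})) :
    c * P (X ⁻¹' g) ≤ P {ω | X ω ∈ g ∧ (X ω, Y ω) ∈ C} := by
  have hC' : MeasurableSet (Prod.fst ⁻¹' g ∩ C) := (measurable_fst hg).inter hC
  have hlaw : P {ω | X ω ∈ g ∧ (X ω, Y ω) ∈ C} =
      ((P.map X).prod (P.map Y)) (Prod.fst ⁻¹' g ∩ C) := by
    rw [← (indepFun_iff_map_prod_eq_prod_map_map hX.aemeasurable hY.aemeasurable).1 hXY,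
      Measure.map_apply (hX.prodMk hY) hC']
    rfl
  rw [hlaw, Measure.prod_apply hC', ← Measure.map_apply hX hg, ← lintegral_indicator_const hg]
  refine lintegral_mono fun v => ?_
  by_cases hv : v ∈ g
  · rw [indicator_of_mem hv, Measure.map_apply hY (measurable_prodMk_left hC')]
    exact (hc v hv).trans_eq (by congr 2; ext w; simp [hv])
  · simp [hv]

def smallJumpsEvent {Ω : Type*} (ξ : ℕ → Ω → ℝ) (s : Finset ℕ) (lo hi R : ℝ) : Set Ω :=
  {ω | ∑ k ∈ s, ξ k ω ∈ Icc lo hi ∧ ∀ k ∈ s, -R ≤ ξ k ω}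

section OneBigJump

variable {Ω : Type*} [MeasurableSpace Ω] {P : Measure Ω} {ξ : ℕ → Ω → ℝ}

theorem measurableSet_smallJumpsEvent (hmeas : ∀ k, Measurable (ξ k)) (s : Finset ℕ)
    (lo hi R : ℝ) : MeasurableSet (smallJumpsEvent ξ s lo hi R) := by
  refine ((Finset.measurable_sum s fun k _ => hmeas k) measurableSet_Icc).inter ?_
  show MeasurableSet {ω | ∀ k ∈ s, -R ≤ ξ k ω}
  simp only [ofPred_forall]
  exact .iInter fun k => .iInter fun _ => measurableSet_le measurable_const (hmeas k)

theorem mul_measure_smallJumpsEvent_le [IsFiniteMeasure P] (hmeas : ∀ k, Measurable (ξ k))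
    (hindep : iIndepFun ξ P) {s : Finset ℕ} {i : ℕ} (his : i ∉ s) {lo hi R x Δ : ℝ}
    {c : ℝ≥0∞} (hc : ∀ t ∈ Icc lo hi, c ≤ P (ξ i ⁻¹' Ico (x - t) (x - t + Δ))) :
    c * P (smallJumpsEvent ξ s lo hi R) ≤
      P (smallJumpsEvent ξ s lo hi R ∩ {ω | ξ i ω + ∑ k ∈ s, ξ k ω ∈ Ico x (x + Δ)}) := by
  set X : Ω → (s → ℝ) := fun ω k => ξ k ω
  set g : Set (s → ℝ) := {v | ∑ k, v k ∈ Icc lo hi ∧ ∀ k, -R ≤ v k}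
  set C : Set ((s → ℝ) × ℝ) := {p | p.2 + ∑ k, p.1 k ∈ Ico x (x + Δ)}
  have hsum : Measurable fun v : s → ℝ => ∑ k, v k :=
    Finset.measurable_sum _ fun k _ => measurable_pi_apply k
  have hg : MeasurableSet g := by
    refine (hsum measurableSet_Icc).inter ?_
    show MeasurableSet {v : s → ℝ | ∀ k, -R ≤ v k}
    simp only [ofPred_forall]
    exact .iInter fun k => measurableSet_le measurable_const (measurable_pi_apply k)
  have hC : MeasurableSet C :=
    (measurable_snd.add (hsum.comp measurable_fst)) measurableSet_Ico
  have hXY : IndepFun X (ξ i) P :=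
    (hindep.indepFun_finset s {i} (Finset.disjoint_singleton_right.2 his) hmeas).comp
      measurable_id
      (measurable_pi_apply (⟨i, Finset.mem_singleton_self i⟩ : ({i} : Finset ℕ)))
  have hXg : X ⁻¹' g = smallJumpsEvent ξ s lo hi R := by
    ext ω; simp [X, g, smallJumpsEvent, Finset.sum_attach s fun k => ξ k ω]
  have hlower := hXY.mul_measure_le_measure (measurable_pi_lambda _ fun k => hmeas k) (hmeas i) hg hC
    (c := c) fun v hv => by
      refine (hc _ hv.1).trans_eq (congrArg P (congrArg _ ?_))
      ext w; simp only [C, Set.mem_Ico, Set.mem_ofPred_eq]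
      constructor <;> intro h <;> constructor <;> linarith [h.1, h.2]
  rw [hXg] at hlower
  refine hlower.trans_eq (congrArg P ?_)
  ext ω; simp [X, g, C, smallJumpsEvent, Finset.sum_attach s fun k => ξ k ω]

-- The events are disjoint: on the `i`-th one `ξ i < x + Δ - lo ≤ -R`, which the `j`-th forbids.
theorem sum_measure_inter_smallJumpsEvent_le (hmeas : ∀ k, Measurable (ξ k)) (s : Finset ℕ)
    {lo hi R x Δ : ℝ} (hjump : x + Δ - lo ≤ -R) :
    ∑ i ∈ s, P (smallJumpsEvent ξ (s.erase i) lo hi R ∩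
        {ω | ξ i ω + ∑ k ∈ s.erase i, ξ k ω ∈ Ico x (x + Δ)}) ≤
      P {ω | ∑ k ∈ s, ξ k ω ∈ Ico x (x + Δ)} := by
  set A : ℕ → Set Ω := fun i => smallJumpsEvent ξ (s.erase i) lo hi R ∩
    {ω | ξ i ω + ∑ k ∈ s.erase i, ξ k ω ∈ Ico x (x + Δ)}
  have hA : ∀ i ∈ s, MeasurableSet (A i) := fun i _ =>
    (measurableSet_smallJumpsEvent hmeas _ lo hi R).inter <|
      ((hmeas i).add (Finset.measurable_sum _ fun k _ => hmeas k)) measurableSet_Ico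
  have hdisj : (s : Set ℕ).PairwiseDisjoint A := by
    intro i his j _ hij
    refine Set.disjoint_left.2 fun ω ⟨⟨hsum, _⟩, hIco⟩ ⟨⟨_, hjumps⟩, _⟩ => ?_
    have hbig : ξ i ω < x + Δ - lo := by linarith [hsum.1, hIco.2]
    linarith [hjumps i (Finset.mem_erase.2 ⟨hij, his⟩)]
  rw [← measure_biUnion_finset hdisj hA]
  refine measure_mono fun ω hω => ?_
  obtain ⟨i, his, -, hIco⟩ := mem_iUnion₂.1 hω
  change ∑ k ∈ s, ξ k ω ∈ Ico x (x + Δ)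
  rwa [← Finset.add_sum_erase s (fun k => ξ k ω) his]

theorem card_mul_le_measure_sum_mem_Ico [IsFiniteMeasure P] (hmeas : ∀ k, Measurable (ξ k))
    (hindep : iIndepFun ξ P) (hident : ∀ k, IdentDistrib (ξ k) (ξ 0) P P) (s : Finset ℕ)
    {lo hi R x Δ : ℝ} {c p : ℝ≥0∞}
    (hc : ∀ t ∈ Icc lo hi, c ≤ P (ξ 0 ⁻¹' Ico (x - t) (x - t + Δ)))
    (hjump : x + Δ - lo ≤ -R) (hp : ∀ i ∈ s, p ≤ P (smallJumpsEvent ξ (s.erase i) lo hi R)) :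
    s.card * (c * p) ≤ P {ω | ∑ k ∈ s, ξ k ω ∈ Ico x (x + Δ)} := by
  refine le_trans ?_ (sum_measure_inter_smallJumpsEvent_le (hi := hi) hmeas s hjump)
  rw [← nsmul_eq_mul, ← Finset.sum_const]
  refine Finset.sum_le_sum fun i his => ?_
  have hci : ∀ t ∈ Icc lo hi, c ≤ P (ξ i ⁻¹' Ico (x - t) (x - t + Δ)) := fun t ht =>
    ((hident i).measure_mem_eq measurableSet_Ico).symm ▸ hc t ht
  exact (mul_le_mul_right (hp i his) c).trans
    (mul_measure_smallJumpsEvent_le hmeas hindep (Finset.notMem_erase i s) hci)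

end OneBigJump

section SmallJumps

variable {Ω : Type*} [MeasurableSpace Ω] {P : Measure Ω} {ξ : ℕ → Ω → ℝ}

theorem meas_ge_abs_sum_sub_le [IsFiniteMeasure P] (hindep : iIndepFun ξ P)
    (hident : ∀ k, IdentDistrib (ξ k) (ξ 0) P P) (hL2 : MemLp (ξ 0) 2 P) (s : Finset ℕ) {ε : ℝ}
    (hε : 0 < ε) :
    P {ω | ε ≤ |∑ k ∈ s, ξ k ω - s.card * ∫ ω, ξ 0 ω ∂P|} ≤
      ENNReal.ofReal (s.card * Var[ξ 0; P] / ε ^ 2) := by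
  have hL2k : ∀ k, MemLp (ξ k) 2 P := fun k => (hident k).symm.memLp_snd hL2
  have hmean : ∫ ω, (∑ k ∈ s, ξ k) ω ∂P = s.card * ∫ ω, ξ 0 ω ∂P := by
    simp only [Finset.sum_apply]
    rw [integral_finsetSum s fun k _ => (hL2k k).integrable one_le_two]
    simp [fun k => (hident k).integral_eq]
  have hvar : Var[∑ k ∈ s, ξ k; P] = s.card * Var[ξ 0; P] := by
    rw [IndepFun.variance_sum (fun k _ => hL2k k) fun k _ l _ hkl => hindep.indepFun hkl]
    simp [fun k => (hident k).variance_eq]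
  have := meas_ge_le_variance_div_sq (memLp_finsetSum' s fun k _ => hL2k k) hε
  rw [hmean, hvar] at this
  simpa only [Finset.sum_apply] using this

theorem measure_exists_lt_neg_le (hident : ∀ k, IdentDistrib (ξ k) (ξ 0) P P) (s : Finset ℕ)
    (R : ℝ) : P {ω | ∃ k ∈ s, ξ k ω < -R} ≤ s.card * P {ω | ξ 0 ω < -R} := by
  calc P {ω | ∃ k ∈ s, ξ k ω < -R} = P (⋃ k ∈ s, ξ k ⁻¹' Iio (-R)) := by congr 1; ext; simp
    _ ≤ ∑ k ∈ s, P (ξ k ⁻¹' Iio (-R)) := measure_biUnion_finset_le s _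
    _ = s.card * P {ω | ξ 0 ω < -R} := by
      rw [Finset.sum_congr rfl fun k _ => (hident k).measure_mem_eq measurableSet_Iio,
        Finset.sum_const, nsmul_eq_mul]
      rfl

theorem half_le_measure_smallJumpsEvent [IsProbabilityMeasure P] (hmeas : ∀ k, Measurable (ξ k))
    (hindep : iIndepFun ξ P) (hident : ∀ k, IdentDistrib (ξ k) (ξ 0) P P)
    (hL2 : Integrable (fun ω => ξ 0 ω ^ 2) P) (s : Finset ℕ) {ε R : ℝ} (hε : 0 < ε) (hR : 0 < R)
    (hεs : 4 * s.card * Var[ξ 0; P] ≤ ε ^ 2) (hRs : 4 * s.card * ∫ ω, ξ 0 ω ^ 2 ∂P ≤ R ^ 2) :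
    1 / 2 ≤ P (smallJumpsEvent ξ s (s.card * ∫ ω, ξ 0 ω ∂P - ε) (s.card * ∫ ω, ξ 0 ω ∂P + ε) R) := by
  set m := s.card * ∫ ω, ξ 0 ω ∂P
  have hcompl : (smallJumpsEvent ξ s (m - ε) (m + ε) R)ᶜ ⊆
      {ω | ε ≤ |∑ k ∈ s, ξ k ω - m|} ∪ {ω | ∃ k ∈ s, ξ k ω < -R} := by
    intro ω hω
    by_contra hgood
    simp only [mem_union, mem_ofPred_eq, not_or, not_le, not_exists, not_and, not_lt] at hgood
    have hdev := abs_lt.1 hgood.1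
    exact hω ⟨⟨by linarith, by linarith⟩, hgood.2⟩
  have hcheb : P {ω | ε ≤ |∑ k ∈ s, ξ k ω - m|} ≤ ENNReal.ofReal (1 / 4) :=
    (meas_ge_abs_sum_sub_le hindep hident
      ((memLp_two_iff_integrable_sq (hmeas 0).aestronglyMeasurable).2 hL2) s hε).trans
      (ENNReal.ofReal_le_ofReal (by rw [div_le_iff₀ (by positivity)]; linarith))
  have htail : P {ω | ∃ k ∈ s, ξ k ω < -R} ≤ ENNReal.ofReal (1 / 4) := by
    refine (measure_exists_lt_neg_le hident s R).trans ?_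
    rw [← ENNReal.ofReal_natCast, measure_lt_eq_ofReal_leftTail, neg_neg,
      ← ENNReal.ofReal_mul (Nat.cast_nonneg _)]
    refine ENNReal.ofReal_le_ofReal ?_
    have hmarkov := leftTail_le_integral_sq_div hL2 hR
    rw [le_div_iff₀ (by positivity)] at hmarkov
    have hR2 : 4 * s.card * leftTail P (ξ 0) R * R ^ 2 ≤ 1 * R ^ 2 := by
      nlinarith [mul_le_mul_of_nonneg_left hmarkov (by positivity : (0 : ℝ) ≤ 4 * s.card)]
    linarith [le_of_mul_le_mul_right hR2 (by positivity)]
  have hbad : P (smallJumpsEvent ξ s (m - ε) (m + ε) R)ᶜ ≤ 1 / 2 := by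
    calc _ ≤ P {ω | ε ≤ |∑ k ∈ s, ξ k ω - m|} + P {ω | ∃ k ∈ s, ξ k ω < -R} :=
          (measure_mono hcompl).trans (measure_union_le _ _)
      _ ≤ ENNReal.ofReal (1 / 4) + ENNReal.ofReal (1 / 4) := add_le_add hcheb htail
      _ = 1 / 2 := by
        rw [← ENNReal.ofReal_add (by norm_num) (by norm_num), show (1 / 4 + 1 / 4 : ℝ) = 2⁻¹ by
          norm_num, ENNReal.ofReal_inv_of_pos two_pos, ENNReal.ofReal_ofNat, one_div]
  rw [prob_compl_eq_one_sub (measurableSet_smallJumpsEvent hmeas s _ _ R)] at hbad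
  calc (1 : ℝ≥0∞) / 2 = 1 - 1 / 2 := (ENNReal.sub_half ENNReal.one_ne_top).symm
    _ ≤ _ := tsub_le_iff_tsub_le.1 hbad

end SmallJumps

section Assembly

variable {Ω : Type*} [MeasurableSpace Ω] {P : Measure Ω}

theorem exists_pos_eventually_le_measure_preimage_Ico [IsFiniteMeasure P] {X : Ω → ℝ}
    (hX : Measurable X) {β : ℝ} (hlrv : LocallyRegularlyVarying (leftTail P X) β) (hβ : 0 < β)
    {μ : ℝ} (hμ : 0 < μ) {Δ : ℝ} (hΔ : 0 < Δ) (x : ℝ) :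
    ∃ c > 0, ∀ᶠ n : ℕ in atTop, ∀ t ∈ Icc (μ * n / 2) (3 * μ * n / 2),
      ENNReal.ofReal (c * (leftTail P X n / n)) ≤ P (X ⁻¹' Ico (x - t) (x - t + Δ)) := by
  have hpos := hlrv.1.pos_of_antitone antitone_leftTail (leftTail_nonneg P X)
  obtain ⟨c, hc, y₀, hinc⟩ := hlrv.exists_pos_eventually_mul_div_le_sub hβ antitone_leftTail hpos
    hΔ (K := 2 * μ) (by positivity)
  refine ⟨c, hc, ?_⟩
  have hn : Tendsto (fun n : ℕ => μ * n) atTop atTop :=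
    tendsto_natCast_atTop_atTop.const_mul_atTop hμ
  filter_upwards [tendsto_natCast_atTop_atTop.eventually hinc,
    hn.eventually_ge_atTop (2 * (y₀ + x + Δ)), hn.eventually_ge_atTop (-2 * (x + Δ))]
    with n hinc hy₀ hxΔ t ht
  rw [measure_preimage_Ico_eq_ofReal_leftTail_sub hX (by linarith),
    show -(x - t + Δ) = t - x - Δ by ring, show -(x - t) = t - x - Δ + Δ by ring]
  exact ENNReal.ofReal_le_ofReal (hinc _ (by linarith [ht.1]) (by linarith [ht.2]))

theorem exists_pos_eventually_leftTail_le_measure_sum_mem_Ico [IsProbabilityMeasure P]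
    {ξ : ℕ → Ω → ℝ} (hmeas : ∀ k, Measurable (ξ k)) (hindep : iIndepFun ξ P)
    (hident : ∀ k, IdentDistrib (ξ k) (ξ 0) P P) (hμ : 0 < ∫ ω, ξ 0 ω ∂P)
    (hL2 : Integrable (fun ω => ξ 0 ω ^ 2) P) {β : ℝ} (hβ : 0 < β)
    (hlrv : LocallyRegularlyVarying (leftTail P (ξ 0)) β) {Δ : ℝ} (hΔ : 0 < Δ) (x : ℝ) :
    ∃ c > 0, ∀ᶠ n : ℕ in atTop, ENNReal.ofReal (c * leftTail P (ξ 0) n) ≤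
      P {ω | ∑ k ∈ Finset.range n, ξ k ω ∈ Ico x (x + Δ)} := by
  set μ := ∫ ω, ξ 0 ω ∂P
  obtain ⟨c, hc, hslice⟩ := exists_pos_eventually_le_measure_preimage_Ico (hmeas 0) hlrv hβ hμ hΔ x
  refine ⟨c / 2, by positivity, ?_⟩
  have hvar : 0 ≤ Var[ξ 0; P] := variance_nonneg _ _
  have hsq : 0 ≤ ∫ ω, ξ 0 ω ^ 2 ∂P := integral_nonneg fun ω => sq_nonneg _
  have hn : ∀ {a : ℝ}, 0 < a → Tendsto (fun n : ℕ => a * n) atTop atTop :=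
    fun ha => tendsto_natCast_atTop_atTop.const_mul_atTop ha
  filter_upwards [hslice, eventually_ge_atTop 4, (hn hμ).eventually_ge_atTop (8 * (x + Δ) / 3),
    (hn (pow_pos hμ 2)).eventually_ge_atTop (64 * Var[ξ 0; P]),
    (hn (pow_pos hμ 2)).eventually_ge_atTop (256 * ∫ ω, ξ 0 ω ^ 2 ∂P)]
    with n hslice hn4 hjump hεn hRn
  have hn4' : (4 : ℝ) ≤ n := by exact_mod_cast hn4
  have hcard : ∀ i ∈ Finset.range n, (((Finset.range n).erase i).card : ℝ) = n - 1 := by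
    intro i hi
    rw [Finset.card_erase_of_mem hi, Finset.card_range, Nat.cast_pred (by omega)]
  have hp : ∀ i ∈ Finset.range n, 1 / 2 ≤ P (smallJumpsEvent ξ ((Finset.range n).erase i)
      ((n - 1) * μ - μ * n / 4) ((n - 1) * μ + μ * n / 4) (μ * n / 8)) := by
    intro i hi
    have h := half_le_measure_smallJumpsEvent hmeas hindep hident hL2 ((Finset.range n).erase i)
      (ε := μ * n / 4) (R := μ * n / 8) (by positivity) (by positivity)
      (by rw [hcard i hi]; nlinarith) (by rw [hcard i hi]; nlinarith)
    rwa [hcard i hi] at h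
  have hbound := card_mul_le_measure_sum_mem_Ico hmeas hindep hident (Finset.range n)
    (fun t ht => hslice t ⟨by nlinarith [ht.1], by nlinarith [ht.2]⟩)
    (by nlinarith [mul_le_mul_of_nonneg_left hn4' hμ.le]) hp
  refine le_trans (le_of_eq ?_) hbound
  rw [Finset.card_range, ← ENNReal.ofReal_natCast, one_div, ← ENNReal.ofReal_ofNat 2,
    ← ENNReal.ofReal_inv_of_pos two_pos,
    ← ENNReal.ofReal_mul (mul_nonneg hc.le (div_nonneg (leftTail_nonneg _ _ _) n.cast_nonneg)),
    ← ENNReal.ofReal_mul n.cast_nonneg]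
  congr 1
  field_simp

end Assembly

theorem ENNReal.tsum_ofReal_mul_eq_top {a b : ℕ → ℝ} {p : ℕ → ℝ≥0∞} {c : ℝ} (ha : ∀ n, 0 ≤ a n)
    (hb : ∀ n, 0 ≤ b n) (hc : 0 < c) (hdiv : ¬ Summable fun n => a n * b n)
    (hp : ∀ᶠ n in atTop, ENNReal.ofReal (c * b n) ≤ p n) :
    ∑' n, ENNReal.ofReal (a n) * p n = ⊤ := by
  by_contra htop
  refine hdiv <| ((ENNReal.summable_toReal htop).div_const c).of_norm_bounded_eventually_nat ?_
  filter_upwards [hp] with n hn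
  rw [Real.norm_of_nonneg (mul_nonneg (ha n) (hb n)), le_div_iff₀ hc]
  have hle : ENNReal.ofReal (a n * b n * c) ≤ ENNReal.ofReal (a n) * p n := by
    rw [mul_assoc, mul_comm (b n), ENNReal.ofReal_mul (ha n)]
    exact mul_le_mul_right hn _
  simpa [ENNReal.toReal_ofReal (mul_nonneg (mul_nonneg (ha n) (hb n)) hc.le)] using
    ENNReal.toReal_mono (ENNReal.ne_top_of_tsum_ne_top htop n) hle

/-- If the weights `aₙ ≥ 0`, the left tail `F₋(t) = P(ξ < -t)` is a
locally regularly varying function of index `-β` with `β > 2`, `E ξ = μ > 0`,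
`E ξ² < ∞`, and `∑ₙ aₙ F₋(n)` diverges, then
`h(x, Δ) = ∑ₙ aₙ P(Sₙ ∈ [x, x+Δ)) = ∞` for every `Δ > 0` and every `x`. -/
theorem stmt9 {Ω : Type*} [MeasureSpace Ω] [IsProbabilityMeasure (ℙ : Measure Ω)]
    (ξ : ℕ → Ω → ℝ)
    (hmeas : ∀ n, Measurable (ξ n))
    (hindep : iIndepFun ξ ℙ)
    (hident : ∀ n, IdentDistrib (ξ n) (ξ 0) ℙ ℙ)
    (hμpos : 0 < ∫ ω, ξ 0 ω ∂ℙ)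
    (hsq : Integrable (fun ω => (ξ 0 ω) ^ 2) ℙ)
    (S : ℕ → Ω → ℝ) (hS : ∀ n ω, S n ω = ∑ i ∈ Finset.range n, ξ i ω)
    (Fm : ℝ → ℝ) (hFm : ∀ t, Fm t = (ℙ {ω | ξ 0 ω < -t}).toReal)
    (β : ℝ) (hβ : 2 < β)
    (hlrv : LocallyRegularlyVarying Fm β)
    (a : ℕ → ℝ) (ha : ∀ n, 0 ≤ a n)
    (hdiv : ¬ Summable (fun n : ℕ => a n * Fm n)) :
    ∀ Δ : ℝ, 0 < Δ → ∀ x : ℝ,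
      (∑' n : ℕ, ENNReal.ofReal (a n) * ℙ {ω | S n ω ∈ Set.Ico x (x + Δ)}) = ⊤ := by
  intro Δ hΔ x
  obtain rfl : Fm = leftTail ℙ (ξ 0) := funext hFm
  obtain ⟨c, hc, hbound⟩ := exists_pos_eventually_leftTail_le_measure_sum_mem_Ico hmeas hindep
    hident hμpos hsq (by linarith) hlrv hΔ x
  simp only [hS]
  exact ENNReal.tsum_ofReal_mul_eq_top ha (leftTail_nonneg _ _ ·) hc hdiv hbound
end
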